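/- The total number of (1:1) mix-split operations performed by the linear dilution gradient algorithm on a target set of size 2^(k+1) + 1 is 2^(k−1)·(k + 4) − 1, for all k ≥ 1. -/

import Mathlib

/-- Total number of (1:1) mix-split operations of the linear dilution gradient
algorithm on the LDT of depth `k` (target set of size `2^(k+1) + 1`):
one mix per leaf (`2^k`), the internal-node production mixes
(`2^i` nodes at depth `i`, each needing `2^(k−i)` droplets, each mix producing
two droplets), and one regeneration mix per internal node (`2^k − 1`). -/
def totalMixSplit (k : ℕ) : ℕ :=
  2 ^ k + (∑ i ∈ Finset.range k, 2 ^ (k - i) * 2 ^ i) / 2 + (2 ^ k - 1)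

open Finset

theorem sum_range_pow_sub_mul_pow {R : Type*} [Semiring R] (a : R) (k : ℕ) :
    ∑ i ∈ range k, a ^ (k - i) * a ^ i = k * a ^ k := by
  rw [sum_congr rfl fun i hi => pow_sub_mul_pow a (mem_range.mp hi).le, sum_const,
    card_range, nsmul_eq_mul]

theorem totalMixSplit_succ (m : ℕ) : totalMixSplit (m + 1) = 2 ^ m * (m + 5) - 1 := by
  have halve : (m + 1) * 2 ^ (m + 1) / 2 = (m + 1) * 2 ^ m := by
    rw [pow_succ, ← mul_assoc, Nat.mul_div_cancel _ two_pos]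
  have hpos : 1 ≤ 2 ^ m := Nat.one_le_two_pow
  rw [totalMixSplit, sum_range_pow_sub_mul_pow, Nat.cast_id, halve, pow_succ]
  zify [hpos, (by nlinarith : 1 ≤ 2 ^ m * 2), (by nlinarith : 1 ≤ 2 ^ m * (m + 5))]
  ring

/-- The total number of (1:1) mix-split operations is `2^(k−1)·(k+4) − 1`. -/
theorem stmt_7 (k : ℕ) (hk : 1 ≤ k) :
    totalMixSplit k = 2 ^ (k - 1) * (k + 4) - 1 := by
  obtain ⟨m, rfl⟩ := Nat.exists_eq_add_of_le' hk
  rw [totalMixSplit_succ, Nat.add_sub_cancel, add_assoc]
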